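/- Let m ≥ 2 and let b be a distinguished index among {1,…,m}. For each i, let J_i* be the maximum of N_i i.i.d. random variables uniform on [c_i, d_i], all samples mutually independent, where for every i ≠ b one has N_i ≤ N_b and c_i ≤ c_b < d_i ≤ d_b (with c_i < d_i, c_b < d_b). Then the probability that J_b* is at least every other J_i* satisfies P(∩_{i≠b} {J_i* ≤ J_b*}) ≥ 1 − (1/2) Σ_{i≠b} ((d_i − c_b)/(d_b − c_b))^{N_b}. -/

import Mathlib

/-!
Let `X = J_i*` and `Y = J_b*`; they are independent, so `P(Y < X) = E[F(X)]` with
`F(t) = P(Y < t) ≤ ((t - c_b) / (d_b - c_b))^{N_b}`. For `t ≤ d_i`, writing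
`(t - c_b) / (d_b - c_b) = r · (t - c_b) / (d_i - c_b)` with `r = (d_i - c_b) / (d_b - c_b)`,
the second factor lies below `(t - c_i) / (d_i - c_i) ≤ 1`, and `N_i ≤ N_b`; hence
`F(t) ≤ r^{N_b} P(X ≤ t)`. So `P(Y < X) ≤ r^{N_b} P(X' ≤ X)` for an independent copy `X'` of `X`,
and `P(X' ≤ X) ≤ 1/2` because the law of `X` has no atoms. A union bound over `i ≠ b` concludes.
-/

open MeasureTheory

/-- The uniform probability distribution on the interval `[c, d]`. -/
noncomputable def uniformIcc (c d : ℝ) : Measure ℝ :=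
  (ENNReal.ofReal (d - c))⁻¹ • volume.restrict (Set.Icc c d)

open ProbabilityTheory Set
open scoped ENNReal

lemma one_sub_sum_measure_compl_le_measure_biInter {Ω ι : Type*} [MeasurableSpace Ω]
    (μ : Measure Ω) [IsProbabilityMeasure μ] (s : Finset ι) (A : ι → Set Ω) :
    1 - ∑ i ∈ s, μ (A i)ᶜ ≤ μ (⋂ i ∈ s, A i) := by
  rw [tsub_le_iff_right]
  calc 1 = μ univ := measure_univ.symm
    _ ≤ μ (⋂ i ∈ s, A i) + μ (⋂ i ∈ s, A i)ᶜ := measure_univ_le_add_compl _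
    _ ≤ μ (⋂ i ∈ s, A i) + ∑ i ∈ s, μ (A i)ᶜ := by
      rw [compl_iInter₂]
      gcongr
      exact measure_biUnion_finset_le _ _

lemma prod_self_setOf_snd_le_fst_le_half (ν : Measure ℝ) [IsProbabilityMeasure ν]
    [NullSingletonClass ν] : (ν.prod ν) {p | p.2 ≤ p.1} ≤ 2⁻¹ := by
  have hdiag : (ν.prod ν) {p | p.2 = p.1} = 0 := by
    rw [Measure.prod_apply (measurableSet_eq_fun measurable_snd measurable_fst)]
    simp
  have hswap : (ν.prod ν) {p | p.2 < p.1} = (ν.prod ν) {p | p.1 < p.2} := by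
    conv_lhs => rw [← Measure.prod_swap]
    rw [Measure.map_apply measurable_swap (measurableSet_lt measurable_snd measurable_fst)]
    rfl
  have hle : (ν.prod ν) {p | p.2 ≤ p.1} ≤ (ν.prod ν) {p | p.1 < p.2} := calc
    (ν.prod ν) {p | p.2 ≤ p.1} ≤ (ν.prod ν) ({p | p.2 < p.1} ∪ {p | p.2 = p.1}) :=
      measure_mono fun p (hp : p.2 ≤ p.1) => hp.lt_or_eq
    _ ≤ (ν.prod ν) {p | p.2 < p.1} + (ν.prod ν) {p | p.2 = p.1} := measure_union_le _ _
    _ = (ν.prod ν) {p | p.1 < p.2} := by rw [hdiag, add_zero, hswap]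
  have hone : (ν.prod ν) {p | p.2 ≤ p.1} + (ν.prod ν) {p | p.1 < p.2} = 1 := by
    simpa [compl_ofPred, not_le] using
      measure_add_measure_compl (μ := ν.prod ν) (measurableSet_le measurable_snd measurable_fst)
  rw [ENNReal.le_inv_iff_mul_le, mul_two]
  exact (add_le_add_right hle _).trans hone.le

lemma prod_setOf_snd_lt_fst_le_mul_half (ν ρ : Measure ℝ) [IsProbabilityMeasure ν]
    [NullSingletonClass ν] [SFinite ρ] (K : ℝ≥0∞)
    (h : ∀ᵐ t ∂ν, ρ (Iio t) ≤ K * ν (Iic t)) :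
    (ν.prod ρ) {p | p.2 < p.1} ≤ K * 2⁻¹ := calc
  (ν.prod ρ) {p | p.2 < p.1} = ∫⁻ t, ρ (Iio t) ∂ν :=
    Measure.prod_apply (measurableSet_lt measurable_snd measurable_fst)
  _ ≤ ∫⁻ t, K * ν (Iic t) ∂ν := lintegral_mono_ae h
  _ = K * (ν.prod ν) {p | p.2 ≤ p.1} := by
    rw [lintegral_const_mul K
        (Monotone.measurable fun _ _ hst => measure_mono (Iic_subset_Iic.2 hst)),
      Measure.prod_apply (measurableSet_le measurable_snd measurable_fst)]
    rfl
  _ ≤ K * 2⁻¹ := by gcongr; exact prod_self_setOf_snd_le_fst_le_half ν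

/-- For `n = 0` this is the Dirac mass at `0`, the junk value of `⨆` over an empty index. -/
noncomputable def maxLaw (μ : Measure ℝ) (n : ℕ) : Measure ℝ :=
  (Measure.pi fun _ : Fin n => μ).map fun y => ⨆ j, y j

lemma measurable_iSup_fin (n : ℕ) : Measurable fun y : Fin n → ℝ => ⨆ j, y j :=
  Measurable.iSup fun j => measurable_pi_apply j

instance isProbabilityMeasure_maxLaw (μ : Measure ℝ) [IsProbabilityMeasure μ] (n : ℕ) :
    IsProbabilityMeasure (maxLaw μ n) :=
  Measure.isProbabilityMeasure_map (measurable_iSup_fin n).aemeasurable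

lemma maxLaw_Iic (μ : Measure ℝ) [SigmaFinite μ] {n : ℕ} (hn : 0 < n) (t : ℝ) :
    maxLaw μ n (Iic t) = μ (Iic t) ^ n := by
  have : Nonempty (Fin n) := Fin.pos_iff_nonempty.mp hn
  have hset : (fun y : Fin n → ℝ => ⨆ j, y j) ⁻¹' Iic t = univ.pi fun _ => Iic t := by
    ext y
    simp [ciSup_le_iff (finite_range y).bddAbove, Pi.le_def]
  rw [maxLaw, Measure.map_apply (measurable_iSup_fin n) measurableSet_Iic, hset,
    Measure.pi_pi, Finset.prod_const, Finset.card_univ, Fintype.card_fin]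

lemma nullSingletonClass_maxLaw (μ : Measure ℝ) [SigmaFinite μ] [NullSingletonClass μ]
    {n : ℕ} (hn : 0 < n) : NullSingletonClass (maxLaw μ n) := by
  refine ⟨fun t => ?_⟩
  have : Nonempty (Fin n) := Fin.pos_iff_nonempty.mp hn
  have hsub : (fun y : Fin n → ℝ => ⨆ j, y j) ⁻¹' {t} ⊆ ⋃ j, Function.eval j ⁻¹' {t} := by
    intro y hy
    obtain ⟨j, hj⟩ := exists_eq_ciSup_of_finite (f := y)
    exact mem_iUnion.2 ⟨j, hj.trans hy⟩
  rw [maxLaw, Measure.map_apply (measurable_iSup_fin n) (measurableSet_singleton t)]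
  exact measure_mono_null hsub
    (measure_iUnion_null fun j => Measure.pi_eval_preimage_null _ (measure_singleton t))

lemma pi_setOf_iSup_lt_iSup {ι : Type*} [Fintype ι] (μ : ι → Measure ℝ)
    [∀ k, IsProbabilityMeasure (μ k)] (n : ι → ℕ) {i b : ι} (hib : i ≠ b) :
    (Measure.pi fun k => Measure.pi fun _ : Fin (n k) => μ k) {ω | ⨆ j, ω b j < ⨆ j, ω i j} =
      ((maxLaw (μ i) (n i)).prod (maxLaw (μ b) (n b))) {p | p.2 < p.1} := by
  have hmeas : ∀ k, Measurable fun ω : ∀ k, Fin (n k) → ℝ => ⨆ j, ω k j :=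
    fun k => (measurable_iSup_fin (n k)).comp (measurable_pi_apply k)
  have hlaw : ∀ k, (Measure.pi fun k => Measure.pi fun _ : Fin (n k) => μ k).map
      (fun ω => ⨆ j, ω k j) = maxLaw (μ k) (n k) := fun k => by
    rw [maxLaw,
      ← (measurePreserving_eval (fun k => Measure.pi fun _ : Fin (n k) => μ k) k).map_eq,
      Measure.map_map (measurable_iSup_fin (n k)) (measurable_pi_apply k)]
    rfl
  have hindep := (iIndepFun_pi (μ := fun k => Measure.pi fun _ : Fin (n k) => μ k)
    (X := fun k (y : Fin (n k) → ℝ) => ⨆ j, y j)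
    fun k => (measurable_iSup_fin (n k)).aemeasurable).indepFun hib
  rw [← hlaw i, ← hlaw b, ← hindep.map_prod_eq_prod_map_map (hmeas i).aemeasurable
    (hmeas b).aemeasurable, Measure.map_apply ((hmeas i).prodMk (hmeas b))
    (measurableSet_lt measurable_snd measurable_fst)]
  rfl

lemma uniformIcc_apply (c d : ℝ) (s : Set ℝ) :
    uniformIcc c d s = (ENNReal.ofReal (d - c))⁻¹ * volume (s ∩ Icc c d) := by
  simp [uniformIcc, Measure.restrict_apply' measurableSet_Icc]

lemma isProbabilityMeasure_uniformIcc {c d : ℝ} (h : c < d) :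
    IsProbabilityMeasure (uniformIcc c d) :=
  ⟨by rw [uniformIcc_apply, univ_inter, Real.volume_Icc,
    ENNReal.inv_mul_cancel (by simpa using h) ENNReal.ofReal_ne_top]⟩

instance nullSingletonClass_uniformIcc (c d : ℝ) : NullSingletonClass (uniformIcc c d) :=
  ⟨fun t => by simp [uniformIcc]⟩

lemma uniformIcc_Iic {c d : ℝ} (h : c < d) (t : ℝ) :
    uniformIcc c d (Iic t) = ENNReal.ofReal ((min d t - c) / (d - c)) := by
  have hinter : Iic t ∩ Icc c d = Icc c (min d t) := by
    ext x
    simp only [mem_inter_iff, mem_Iic, mem_Icc, le_min_iff]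
    tauto
  rw [uniformIcc_apply, hinter, Real.volume_Icc,
    ENNReal.ofReal_div_of_pos (sub_pos.2 h), ENNReal.div_eq_inv_mul]

lemma maxLaw_uniformIcc_Iic {n : ℕ} (hn : 0 < n) {c d : ℝ} (h : c < d) (t : ℝ) :
    maxLaw (uniformIcc c d) n (Iic t) = ENNReal.ofReal ((min d t - c) / (d - c)) ^ n := by
  have := isProbabilityMeasure_uniformIcc h
  rw [maxLaw_Iic _ hn, uniformIcc_Iic h]

lemma ae_le_maxLaw_uniformIcc {n : ℕ} (hn : 0 < n) {c d : ℝ} (h : c < d) :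
    ∀ᵐ t ∂maxLaw (uniformIcc c d) n, t ≤ d := by
  have := isProbabilityMeasure_uniformIcc h
  have hcompl : {t | ¬t ≤ d} = (Iic d)ᶜ := rfl
  rw [ae_iff, hcompl, prob_compl_eq_one_sub measurableSet_Iic, maxLaw_uniformIcc_Iic hn h,
    min_self, div_self (sub_pos.2 h).ne', ENNReal.ofReal_one, one_pow, tsub_self]

lemma div_sub_le_div_sub {a a' t d : ℝ} (ha : a' ≤ a) (htd : t ≤ d) (had : a < d) :
    (t - a) / (d - a) ≤ (t - a') / (d - a') := by
  rw [div_le_div_iff₀ (by linarith) (by linarith)]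
  nlinarith

lemma ofReal_div_sub_pow_le_mul {ci di cb db t : ℝ} {Ni Nb : ℕ} (hN : Ni ≤ Nb) (hc : ci ≤ cb)
    (hcd : cb < di) (hd : di ≤ db) (ht : t ≤ di) :
    ENNReal.ofReal ((t - cb) / (db - cb)) ^ Nb ≤
      ENNReal.ofReal ((di - cb) / (db - cb)) ^ Nb * ENNReal.ofReal ((t - ci) / (di - ci)) ^ Ni := by
  have hsplit : (t - cb) / (db - cb) = (di - cb) / (db - cb) * ((t - cb) / (di - cb)) := by
    field_simp [(sub_pos.2 hcd).ne', (sub_pos.2 (hcd.trans_le hd)).ne']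
  rw [hsplit, ENNReal.ofReal_mul (div_nonneg (sub_pos.2 hcd).le (by linarith)), mul_pow]
  gcongr _ * ?_
  calc ENNReal.ofReal ((t - cb) / (di - cb)) ^ Nb ≤ ENNReal.ofReal ((t - cb) / (di - cb)) ^ Ni :=
        pow_le_pow_right_of_le_one' (ENNReal.ofReal_le_one.2 ((div_le_one (by linarith)).2
          (by linarith))) hN
    _ ≤ ENNReal.ofReal ((t - ci) / (di - ci)) ^ Ni :=
        pow_le_pow_left₀ zero_le (ENNReal.ofReal_le_ofReal (div_sub_le_div_sub hc ht hcd)) _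

lemma pi_uniformIcc_setOf_iSup_lt_iSup_le {ι : Type*} [Fintype ι] (N : ι → ℕ) (c d : ι → ℝ)
    (hcd : ∀ k, c k < d k) {i b : ι} (hib : i ≠ b) (hNi : 0 < N i) (hNb : 0 < N b)
    (hNle : N i ≤ N b) (hcc : c i ≤ c b) (hcbd : c b < d i) (hdd : d i ≤ d b) :
    (Measure.pi fun k => Measure.pi fun _ : Fin (N k) => uniformIcc (c k) (d k))
        {ω | ⨆ j, ω b j < ⨆ j, ω i j} ≤
      ENNReal.ofReal (1 / 2 * ((d i - c b) / (d b - c b)) ^ N b) := by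
  have := fun k => isProbabilityMeasure_uniformIcc (hcd k)
  have := nullSingletonClass_maxLaw (uniformIcc (c i) (d i)) hNi
  have hr : 0 ≤ (d i - c b) / (d b - c b) := div_nonneg (by linarith) (by linarith)
  rw [pi_setOf_iSup_lt_iSup _ _ hib]
  calc _ ≤ ENNReal.ofReal ((d i - c b) / (d b - c b)) ^ N b * 2⁻¹ := by
        refine prod_setOf_snd_lt_fst_le_mul_half _ _ _
          ((ae_le_maxLaw_uniformIcc hNi (hcd i)).mono fun t ht => ?_)
        rw [maxLaw_uniformIcc_Iic hNi (hcd i), min_eq_right ht]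
        calc maxLaw (uniformIcc (c b) (d b)) (N b) (Iio t)
            ≤ maxLaw (uniformIcc (c b) (d b)) (N b) (Iic t) := measure_mono Iio_subset_Iic_self
          _ = ENNReal.ofReal ((t - c b) / (d b - c b)) ^ N b := by
            rw [maxLaw_uniformIcc_Iic hNb (hcd b), min_eq_right (ht.trans hdd)]
          _ ≤ _ := ofReal_div_sub_pow_le_mul hNle hcc hcbd hdd ht
    _ = ENNReal.ofReal (1 / 2 * ((d i - c b) / (d b - c b)) ^ N b) := by
        rw [mul_comm, ENNReal.ofReal_mul (by norm_num), ENNReal.ofReal_pow hr, one_div,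
          ENNReal.ofReal_inv_of_pos two_pos, ENNReal.ofReal_ofNat]

theorem stmt7_general (m : ℕ) (b : Fin m)
    (N : Fin m → ℕ) (c d : Fin m → ℝ)
    (hN : ∀ i, 0 < N i) (hcd : ∀ i, c i < d i)
    (hNle : ∀ i, i ≠ b → N i ≤ N b)
    (hcc : ∀ i, i ≠ b → c i ≤ c b)
    (hcbd : ∀ i, i ≠ b → c b < d i)
    (hdd : ∀ i, i ≠ b → d i ≤ d b) :
    ENNReal.ofReal (1 - (1 / 2) *
        ∑ i ∈ Finset.univ.filter (fun i => i ≠ b),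
          ((d i - c b) / (d b - c b)) ^ (N b)) ≤
      (Measure.pi fun i : Fin m =>
          Measure.pi fun _ : Fin (N i) => uniformIcc (c i) (d i))
        {ω : ∀ i : Fin m, Fin (N i) → ℝ |
          ∀ i, i ≠ b → (⨆ j, ω i j) ≤ ⨆ j, ω b j} := by
  have := fun k => isProbabilityMeasure_uniformIcc (hcd k)
  have hterm : ∀ i ∈ Finset.univ.filter (fun i => i ≠ b),
      0 ≤ 1 / 2 * ((d i - c b) / (d b - c b)) ^ N b := fun i hi => by
    have := hcbd i (Finset.mem_filter.1 hi).2
    have := hcd b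
    positivity
  have hevent : {ω : ∀ i : Fin m, Fin (N i) → ℝ | ∀ i, i ≠ b → (⨆ j, ω i j) ≤ ⨆ j, ω b j} =
      ⋂ i ∈ Finset.univ.filter (fun i => i ≠ b), {ω | (⨆ j, ω i j) ≤ ⨆ j, ω b j} := by
    ext ω
    simp
  rw [hevent, Finset.mul_sum, ENNReal.ofReal_sub _ (Finset.sum_nonneg hterm), ENNReal.ofReal_one,
    ENNReal.ofReal_sum_of_nonneg hterm]
  refine le_trans (tsub_le_tsub_left (Finset.sum_le_sum fun i hi => ?_) 1)
    (one_sub_sum_measure_compl_le_measure_biInter _ _ _)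
  have hib := (Finset.mem_filter.1 hi).2
  simpa only [compl_ofPred, not_le] using pi_uniformIcc_setOf_iSup_lt_iSup_le N c d hcd hib
    (hN i) (hN b) (hNle i hib) (hcc i hib) (hcbd i hib) (hdd i hib)

/-- Bonferroni bound: with `m ≥ 2` start nodes and for each `i` the maximum
`J_i*` of `N_i` i.i.d. uniform samples on `[c_i, d_i]` (all samples mutually
independent), where for every `i ≠ b` we have `N_i ≤ N_b` and
`c_i ≤ c_b < d_i ≤ d_b`, the probability that `J_b*` is at least every other
`J_i*` is at least `1 − (1/2) Σ_{i≠b} ((d_i − c_b)/(d_b − c_b))^{N_b}`. -/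
theorem stmt7 (m : ℕ) (hm : 2 ≤ m) (b : Fin m)
    (N : Fin m → ℕ) (c d : Fin m → ℝ)
    (hN : ∀ i, 0 < N i) (hcd : ∀ i, c i < d i)
    (hNle : ∀ i, i ≠ b → N i ≤ N b)
    (hcc : ∀ i, i ≠ b → c i ≤ c b)
    (hcbd : ∀ i, i ≠ b → c b < d i)
    (hdd : ∀ i, i ≠ b → d i ≤ d b) :
    ENNReal.ofReal (1 - (1 / 2) *
        ∑ i ∈ Finset.univ.filter (fun i => i ≠ b),
          ((d i - c b) / (d b - c b)) ^ (N b)) ≤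
      (Measure.pi fun i : Fin m =>
          Measure.pi fun _ : Fin (N i) => uniformIcc (c i) (d i))
        {ω : ∀ i : Fin m, Fin (N i) → ℝ |
          ∀ i, i ≠ b → (⨆ j, ω i j) ≤ ⨆ j, ω b j} :=
  stmt7_general m b N c d hN hcd hNle hcc hcbd hdd
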